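/- With F obtained from F̃ by right composition with a 2×2 real matrix T (F^i_{mnp} = Σ F̃^i_{m̃ñp̃} T^m̃_m T^ñ_n T^p̃_p), one has G_{1122}(F) = det(T) · ω̃[3](z¹,z²,z³,z⁴) where z¹ = T¹₁, z² = T²₁, z³ = T¹₂, z⁴ = T²₂ and ω̃[3] = 3G̃_{1111}(z¹)²(z³)² + 3G̃_{1112}(z¹)²z³z⁴ + G̃_{1122}(z¹)²(z⁴)² + 3G̃_{1112}z¹z²(z³)² + (9G̃_{1212}+G̃_{1122})z¹z²z³z⁴ + 3G̃_{1222}z¹z²(z⁴)² + G̃_{1122}(z²)²(z³)² + 3G̃_{1222}(z²)²z³z⁴ + 3G̃_{2222}(z²)²(z⁴)². -/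
import Mathlib


/-- A cubic coefficient array on ℝ²: one upper index, three lower indices in {1,2}. -/
abbrev CubicTensor := Fin 2 → Fin 2 → Fin 2 → Fin 2 → ℝ

/-- Symmetry in the three lower indices. -/
def SymLower (F : CubicTensor) : Prop :=
  ∀ i m n p, F i m n p = F i n m p ∧ F i m n p = F i m p n

def G1111 (F : CubicTensor) : ℝ := F 0 0 0 0 * F 1 0 0 1 - F 0 0 0 1 * F 1 0 0 0
def G1112 (F : CubicTensor) : ℝ := F 0 0 0 0 * F 1 0 1 1 - F 0 0 1 1 * F 1 0 0 0
def G1122 (F : CubicTensor) : ℝ := F 0 0 0 0 * F 1 1 1 1 - F 0 1 1 1 * F 1 0 0 0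
def G1212 (F : CubicTensor) : ℝ := F 0 0 0 1 * F 1 0 1 1 - F 0 0 1 1 * F 1 0 0 1
def G1222 (F : CubicTensor) : ℝ := F 0 0 0 1 * F 1 1 1 1 - F 0 1 1 1 * F 1 0 0 1
def G2222 (F : CubicTensor) : ℝ := F 0 0 1 1 * F 1 1 1 1 - F 0 1 1 1 * F 1 0 1 1

/-- The quartic form ω[3] built from the determinants of F. -/
def omega3 (F : CubicTensor) (z1 z2 z3 z4 : ℝ) : ℝ :=
  3 * G1111 F * z1^2 * z3^2 + 3 * G1112 F * z1^2 * z3 * z4 + G1122 F * z1^2 * z4^2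
    + 3 * G1112 F * z1 * z2 * z3^2 + (9 * G1212 F + G1122 F) * z1 * z2 * z3 * z4
    + 3 * G1222 F * z1 * z2 * z4^2 + G1122 F * z2^2 * z3^2
    + 3 * G1222 F * z2^2 * z3 * z4 + 3 * G2222 F * z2^2 * z4^2

theorem right_composition_G1122 (F Ft : CubicTensor) (T : Matrix (Fin 2) (Fin 2) ℝ)
    (hFt : SymLower Ft) (hT : IsUnit T.det)
    (hrel : ∀ i m n p, F i m n p =
      ∑ mt : Fin 2, ∑ nt : Fin 2, ∑ pt : Fin 2,
        Ft i mt nt pt * T mt m * T nt n * T pt p) :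
    G1122 F = T.det * omega3 Ft (T 0 0) (T 1 0) (T 0 1) (T 1 1) := by
  have h2 : ∀ i, Ft i 0 1 0 = Ft i 0 0 1 := fun i => (hFt i 0 1 0).2
  have h1 : ∀ i, Ft i 1 0 0 = Ft i 0 0 1 := fun i => ((hFt i 1 0 0).1.trans (h2 i))
  have h3 : ∀ i, Ft i 1 0 1 = Ft i 0 1 1 := fun i => (hFt i 1 0 1).1
  have h4 : ∀ i, Ft i 1 1 0 = Ft i 0 1 1 := fun i => ((hFt i 1 1 0).2.trans (h3 i))
  simp only [G1122, hrel, Fin.sum_univ_two, omega3, G1111, G1112, G1212, G1222, G2222,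
    Matrix.det_fin_two, h1, h2, h3, h4]
  ring
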